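/- For every ε > 0 and every tollbooth instance on a star graph, there exists an item pricing p such that for every arrival order σ and every tie-breaking choice t, Wel(p,σ,t) ≥ OPT/(2 + ε). (When the seller has no tie-breaking power, the competitive ratio of item pricing on stars is at most 2 + ε for every ε > 0.) -/

import Mathlib

open scoped Classical NNReal ENNReal

noncomputable section

namespace Tollbooth

variable {V : Type*} [Fintype V] [DecidableEq V]

/-- Total price (in `ℝ≥0∞`) of a set of edges under an item pricing `p`. -/
def price (p : Sym2 V → ℝ≥0∞) (s : Finset (Sym2 V)) : ℝ≥0∞ := ∑ e ∈ s, p e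

/-- One step of the selling process: the state consists of the set of available edges together
with the set of buyers that have purchased so far; buyer `j` purchases exactly when all the
edges of her demand path are available and either the price is strictly below her value, or the
price equals her value and her tie-breaking bit `t j` is `true`. -/
def step {n : ℕ} (p : Sym2 V → ℝ≥0∞) (Q : Fin n → Finset (Sym2 V)) (v : Fin n → ℝ≥0)
    (t : Fin n → Bool) (st : Finset (Sym2 V) × Finset (Fin n)) (j : Fin n) :
    Finset (Sym2 V) × Finset (Fin n) :=
  if Q j ⊆ st.1 ∧
      (price p (Q j) < (v j : ℝ≥0∞) ∨ (price p (Q j) = (v j : ℝ≥0∞) ∧ t j = true)) then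
    (st.1 \ Q j, insert j st.2)
  else st

/-- The set of buyers who purchase, when buyers arrive in the order `σ 0, σ 1, …`,
starting from all edges of `G` being available. -/
def purchased {n : ℕ} (G : SimpleGraph V) (p : Sym2 V → ℝ≥0∞) (Q : Fin n → Finset (Sym2 V))
    (v : Fin n → ℝ≥0) (σ : Equiv.Perm (Fin n)) (t : Fin n → Bool) : Finset (Fin n) :=
  ((List.ofFn fun i => σ i).foldl (step p Q v t) (G.edgeFinset, ∅)).2

/-- The welfare obtained by the item pricing `p` under arrival order `σ` and
tie-breaking choice `t`. -/
def Wel {n : ℕ} (G : SimpleGraph V) (p : Sym2 V → ℝ≥0∞) (Q : Fin n → Finset (Sym2 V))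
    (v : Fin n → ℝ≥0) (σ : Equiv.Perm (Fin n)) (t : Fin n → Bool) : ℝ≥0 :=
  ∑ j ∈ purchased G p Q v σ t, v j

/-- The hindsight optimal welfare: the maximum total value of a set of buyers whose demand
paths are pairwise edge-disjoint. -/
def OPT {n : ℕ} (Q : Fin n → Finset (Sym2 V)) (v : Fin n → ℝ≥0) : ℝ≥0 :=
  (Finset.univ.powerset.filter fun S : Finset (Fin n) =>
      (S : Set (Fin n)).Pairwise fun j k => Disjoint (Q j) (Q k)).sup
    fun S => ∑ j ∈ S, v j

/-- `s` is the (nonempty) edge set of a path of `G`. -/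
def IsPathEdges (G : SimpleGraph V) (s : Finset (Sym2 V)) : Prop :=
  ∃ (a b : V) (W : G.Walk a b), W.IsPath ∧ W.edges ≠ [] ∧ s = W.edges.toFinset

/-- A tollbooth instance on `G`: at least one buyer, every buyer has positive value and
demands (the edge set of) a path of `G`. -/
def Instance {n : ℕ} (G : SimpleGraph V) (Q : Fin n → Finset (Sym2 V)) (v : Fin n → ℝ≥0) :
    Prop :=
  1 ≤ n ∧ ∀ j, 0 < v j ∧ IsPathEdges G (Q j)

/-- A star: a tree all of whose edges share a common vertex. -/
def IsStar (G : SimpleGraph V) : Prop := G.IsTree ∧ ∃ c : V, ∀ e ∈ G.edgeSet, c ∈ e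

/-- A spider: a tree with at most one vertex of degree at least `3`. -/
def IsSpider (G : SimpleGraph V) : Prop :=
  G.IsTree ∧ {w : V | 3 ≤ G.degree w}.Subsingleton

/-- A cycle graph: a connected graph in which every vertex has degree exactly `2`. -/
def IsCycleGraph (G : SimpleGraph V) : Prop := G.Connected ∧ ∀ w : V, G.degree w = 2

/-- A path graph: a tree in which every vertex has degree at most `2`. -/
def IsPathGraph (G : SimpleGraph V) : Prop := G.IsTree ∧ ∀ w : V, G.degree w ≤ 2

end Tollbooth

/-! Take an optimal set `S` of buyers and charge every edge of the path of `j ∈ S` the amount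
`v j / (2 + ε)`, all other edges `0`. On a star every path has at most two edges, so each `j ∈ S`
sees a price strictly below her value: whenever she arrives she either buys or finds an edge of
her path already sold. Hence every path of `S` contains a sold edge, and the revenue of the sold
edges is at least `OPT / (2 + ε)`. Since no buyer pays more than her value, the welfare is at
least the revenue. -/

theorem SimpleGraph.Walk.IsPath.length_le_two_of_forall_mem_edges {V : Type*}
    {G : SimpleGraph V} {c a b : V} {W : G.Walk a b} (hW : W.IsPath)
    (hc : ∀ e ∈ W.edges, c ∈ e) : W.length ≤ 2 := by
  match W with
  | .nil | .cons _ .nil | .cons _ (.cons _ .nil) => simp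
  | .cons (v := x) _ (.cons (v := y) _ (.cons (v := z) _ W')) =>
    exfalso
    have hnd := hW.support_nodup
    simp only [SimpleGraph.Walk.support_cons, List.nodup_cons, List.mem_cons, not_or] at hnd
    have hz : z ∈ W'.support := W'.start_mem_support
    have hax : c ∈ s(a, x) := hc _ (by simp)
    have hxy : c ∈ s(x, y) := hc _ (by simp)
    have hyz : c ∈ s(y, z) := hc _ (by simp)
    rw [Sym2.mem_iff] at hax hxy hyz
    rcases hxy with rfl | rfl <;> rcases hax with h | h <;> rcases hyz with h' | h' <;>
      simp_all

namespace Tollbooth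

open Finset

variable {V : Type*} [DecidableEq V] {n : ℕ}

section Paths

variable {G : SimpleGraph V} {s : Finset (Sym2 V)}

theorem IsPathEdges.nonempty (h : IsPathEdges G s) : s.Nonempty := by
  obtain ⟨_, _, W, -, hne, rfl⟩ := h
  obtain ⟨e, he⟩ := List.exists_mem_of_ne_nil _ hne
  exact ⟨e, List.mem_toFinset.mpr he⟩

theorem IsPathEdges.subset_edgeFinset [Fintype V] (h : IsPathEdges G s) :
    s ⊆ G.edgeFinset := by
  obtain ⟨_, _, W, -, -, rfl⟩ := h
  intro e he
  exact SimpleGraph.mem_edgeFinset.mpr (W.edges_subset_edgeSet (List.mem_toFinset.mp he))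

theorem IsStar.card_le_two (hG : IsStar G) (h : IsPathEdges G s) : #s ≤ 2 := by
  obtain ⟨-, c, hc⟩ := hG
  obtain ⟨_, _, W, hW, -, rfl⟩ := h
  calc #W.edges.toFinset ≤ W.edges.length := W.edges.toFinset_card_le
    _ = W.length := W.length_edges
    _ ≤ 2 := hW.length_le_two_of_forall_mem_edges fun e he => hc e (W.edges_subset_edgeSet he)

end Paths

theorem exists_pairwise_disjoint_OPT_eq_sum (Q : Fin n → Finset (Sym2 V)) (v : Fin n → ℝ≥0) :
    ∃ S : Finset (Fin n), (S : Set (Fin n)).Pairwise (fun j k => Disjoint (Q j) (Q k)) ∧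
      OPT Q v = ∑ j ∈ S, v j := by
  obtain ⟨S, hS, hOPT⟩ := exists_mem_eq_sup (univ.powerset.filter fun S : Finset (Fin n) =>
    (S : Set (Fin n)).Pairwise fun j k => Disjoint (Q j) (Q k)) ⟨∅, by simp⟩ fun S => ∑ j ∈ S, v j
  exact ⟨S, (mem_filter.mp hS).2, hOPT⟩

section Selling

variable {G : SimpleGraph V} {p : Sym2 V → ℝ≥0∞} {Q : Fin n → Finset (Sym2 V)} {v : Fin n → ℝ≥0}
  {t : Fin n → Bool} {st : Finset (Sym2 V) × Finset (Fin n)}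

theorem fst_step_subset (j : Fin n) : (step p Q v t st j).1 ⊆ st.1 := by
  unfold step
  split_ifs
  exacts [sdiff_subset, subset_rfl]

theorem fst_foldl_step_subset (l : List (Fin n)) : (l.foldl (step p Q v t) st).1 ⊆ st.1 := by
  induction l generalizing st with
  | nil => exact subset_rfl
  | cons j l ih => exact ih.trans (fst_step_subset j)

theorem not_subset_fst_step {j : Fin n} (hne : (Q j).Nonempty) (hlt : price p (Q j) < v j) :
    ¬ Q j ⊆ (step p Q v t st j).1 := by
  unfold step
  split_ifs with h
  · obtain ⟨e, he⟩ := hne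
    exact fun hsub => (mem_sdiff.mp (hsub he)).2 he
  · exact fun hsub => h ⟨hsub, Or.inl hlt⟩

theorem not_subset_fst_foldl_step {l : List (Fin n)} {j : Fin n} (hj : j ∈ l)
    (hne : (Q j).Nonempty) (hlt : price p (Q j) < v j) :
    ¬ Q j ⊆ (l.foldl (step p Q v t) st).1 := by
  induction l generalizing st with
  | nil => simp at hj
  | cons k l ih =>
    rcases List.mem_cons.mp hj with rfl | hj
    · exact fun hsub => not_subset_fst_step hne hlt (hsub.trans (fst_foldl_step_subset l))
    · exact ih hj

variable [Fintype V]

variable (G p Q v) in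
def IsConsistent (st : Finset (Sym2 V) × Finset (Fin n)) : Prop :=
  st.1 = G.edgeFinset \ st.2.biUnion Q ∧
  (∀ k ∈ st.2, price p (Q k) ≤ v k) ∧
  (st.2 : Set (Fin n)).Pairwise fun j k => Disjoint (Q j) (Q k)

theorem IsConsistent.step (h : IsConsistent G p Q v st) (j : Fin n) :
    IsConsistent G p Q v (Tollbooth.step p Q v t st j) := by
  obtain ⟨havail, hpay, hdisj⟩ := h
  unfold Tollbooth.step
  split_ifs with hbuy
  · obtain ⟨hsub, hprice⟩ := hbuy
    rw [havail, subset_sdiff] at hsub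
    have hdisj_j : ∀ k ∈ st.2, Disjoint (Q j) (Q k) := fun k hk =>
      hsub.2.mono_right (subset_biUnion_of_mem Q hk)
    refine ⟨?_, ?_, ?_⟩
    · change st.1 \ Q j = G.edgeFinset \ (insert j st.2).biUnion Q
      rw [havail, biUnion_insert, sdiff_sdiff_left, sup_eq_union, union_comm]
    · intro k hk
      rcases mem_insert.mp hk with rfl | hk
      · rcases hprice with h | h
        exacts [h.le, h.1.le]
      · exact hpay k hk
    · rw [coe_insert]
      exact hdisj.insert fun k hk _ => ⟨hdisj_j k hk, (hdisj_j k hk).symm⟩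
  · exact ⟨havail, hpay, hdisj⟩

theorem IsConsistent.foldl (h : IsConsistent G p Q v st) (l : List (Fin n)) :
    IsConsistent G p Q v (l.foldl (Tollbooth.step p Q v t) st) := by
  induction l generalizing st with
  | nil => exact h
  | cons j l ih => exact ih (h.step j)

variable {σ : Equiv.Perm (Fin n)}

variable (G p Q v t σ) in
theorem isConsistent_foldl_purchased :
    IsConsistent G p Q v ((List.ofFn fun i => σ i).foldl (step p Q v t) (G.edgeFinset, ∅)) :=
  IsConsistent.foldl ⟨by simp, by simp, by simp⟩ _

theorem price_biUnion_purchased_le_wel :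
    price p ((purchased G p Q v σ t).biUnion Q) ≤ Wel G p Q v σ t := by
  obtain ⟨-, hpay, hdisj⟩ := isConsistent_foldl_purchased G p Q v t σ
  unfold Wel purchased
  rw [price, sum_biUnion hdisj, ENNReal.ofNNReal_finsetSum]
  exact sum_le_sum hpay

theorem not_disjoint_biUnion_purchased {j : Fin n} (hne : (Q j).Nonempty)
    (hE : Q j ⊆ G.edgeFinset) (hlt : price p (Q j) < v j) :
    ¬ Disjoint (Q j) ((purchased G p Q v σ t).biUnion Q) := by
  intro hdisj
  obtain ⟨havail, -, -⟩ := isConsistent_foldl_purchased G p Q v t σ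
  have hj : j ∈ List.ofFn fun i => σ i := List.mem_ofFn.mpr ⟨σ.symm j, σ.apply_symm_apply j⟩
  refine not_subset_fst_foldl_step (st := (G.edgeFinset, ∅)) (t := t) hj hne hlt ?_
  rw [havail, subset_sdiff]
  exact ⟨hE, hdisj⟩

end Selling

section SharePricing

variable (Q : Fin n → Finset (Sym2 V)) (v : Fin n → ℝ≥0) (S : Finset (Fin n)) (c : ℝ≥0∞)

/-- A sum rather than a choice of the buyer `j ∈ S` whose path contains `e`: it needs no
disjointness to be defined, and on pairwise disjoint paths it has a single term. -/
def sharePricing (e : Sym2 V) : ℝ≥0∞ := ∑ j ∈ S with e ∈ Q j, v j / c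

theorem price_sharePricing (B : Finset (Sym2 V)) :
    price (sharePricing Q v S c) B = ∑ j ∈ S, #(Q j ∩ B) * (v j / c) := by
  simp only [price, sharePricing, sum_filter]
  rw [sum_comm]
  refine sum_congr rfl fun j _ => ?_
  rw [← sum_filter, sum_const, nsmul_eq_mul, filter_mem_eq_inter, inter_comm]

variable {Q v S c}

theorem sum_div_le_price_sharePricing {B : Finset (Sym2 V)}
    (hB : ∀ j ∈ S, ¬ Disjoint (Q j) B) :
    (∑ j ∈ S, (v j : ℝ≥0∞)) / c ≤ price (sharePricing Q v S c) B := by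
  rw [price_sharePricing]
  simp only [div_eq_mul_inv, sum_mul]
  refine sum_le_sum fun j hj => le_mul_of_one_le_left' ?_
  exact_mod_cast one_le_card.mpr (not_disjoint_iff_nonempty_inter.mp (hB j hj))

theorem price_sharePricing_of_mem
    (hS : (S : Set (Fin n)).Pairwise fun j k => Disjoint (Q j) (Q k)) {j : Fin n} (hj : j ∈ S) :
    price (sharePricing Q v S c) (Q j) = #(Q j) * (v j / c) := by
  rw [price_sharePricing, sum_eq_single_of_mem j hj, inter_self]
  intro k hk hkj
  rw [disjoint_iff_inter_eq_empty.mp (hS hk hj hkj), card_empty, Nat.cast_zero, zero_mul]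

theorem price_sharePricing_lt {ε : ℝ≥0} (hε : 0 < ε)
    (hS : (S : Set (Fin n)).Pairwise fun j k => Disjoint (Q j) (Q k)) {j : Fin n} (hj : j ∈ S)
    (hcard : #(Q j) ≤ 2) (hv : 0 < v j) :
    price (sharePricing Q v S ((2 + ε : ℝ≥0) : ℝ≥0∞)) (Q j) < v j := by
  rw [price_sharePricing_of_mem hS hj, ← ENNReal.coe_natCast, ← ENNReal.coe_div (by positivity),
    ← ENNReal.coe_mul, ENNReal.coe_lt_coe, mul_div_assoc', div_lt_iff₀ (by positivity)]
  calc (#(Q j) : ℝ≥0) * v j ≤ 2 * v j := by gcongr; exact_mod_cast hcard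
    _ < v j * (2 + ε) := by rw [mul_comm, mul_add]; exact lt_add_of_pos_right _ (mul_pos hv hε)

end SharePricing

end Tollbooth

/-- For every `ε > 0` and every tollbooth instance on a star graph, there
exists an item pricing `p` such that for every arrival order `σ` and every tie-breaking
choice `t`, `Wel(p,σ,t) ≥ OPT/(2 + ε)`. -/
theorem star_no_tie_gap_le_two_add_eps {V : Type*} [Fintype V] [DecidableEq V]
    (ε : ℝ≥0) (hε : 0 < ε)
    (G : SimpleGraph V) (hG : Tollbooth.IsStar G)
    {n : ℕ} (Q : Fin n → Finset (Sym2 V)) (v : Fin n → ℝ≥0)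
    (hI : Tollbooth.Instance G Q v) :
    ∃ p : Sym2 V → ℝ≥0∞, ∀ (σ : Equiv.Perm (Fin n)) (t : Fin n → Bool),
      Tollbooth.OPT Q v / (2 + ε) ≤ Tollbooth.Wel G p Q v σ t := by
  obtain ⟨S, hS, hOPT⟩ := Tollbooth.exists_pairwise_disjoint_OPT_eq_sum Q v
  set p := Tollbooth.sharePricing Q v S ((2 + ε : ℝ≥0) : ℝ≥0∞)
  refine ⟨p, fun σ t => ?_⟩
  set sold := (Tollbooth.purchased G p Q v σ t).biUnion Q
  have hsold : ∀ j ∈ S, ¬ Disjoint (Q j) sold := fun j hj =>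
    have hQ := (hI.2 j).2
    Tollbooth.not_disjoint_biUnion_purchased hQ.nonempty hQ.subset_edgeFinset
      (Tollbooth.price_sharePricing_lt hε hS hj (hG.card_le_two hQ) (hI.2 j).1)
  rw [← ENNReal.coe_le_coe, ENNReal.coe_div (by positivity), hOPT, ENNReal.ofNNReal_finsetSum]
  calc (∑ j ∈ S, (v j : ℝ≥0∞)) / ((2 + ε : ℝ≥0) : ℝ≥0∞)
      ≤ Tollbooth.price p sold := Tollbooth.sum_div_le_price_sharePricing hsold
    _ ≤ Tollbooth.Wel G p Q v σ t := Tollbooth.price_biUnion_purchased_le_wel
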